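/- arXiv:2410.22344 — 2 statements merged into one kernel-verified Lean document; each statement's English description precedes it below -/
import Mathlib

section
/- The function f produced by the merge tree algorithm is a discrete Morse function on the output graph in which every simplex is critical. -/
/-- A chiral merge tree: a full binary tree where each node's first child is the
left (L) child and its second child is the right (R) child. -/
inductive CMT : Type
  | leaf : CMT
  | node : CMT → CMT → CMT

/-- `t.isPos p` : the list of moves `p` (`false` = L, `true` = R) from the root
is a valid node (position) of `t`. -/
def CMT.isPos : CMT → List Bool → Prop
  | _, [] => True
  | .leaf, _ :: _ => False
  | .node l _, false :: p => l.isPos p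
  | .node _ r, true :: p => r.isPos p

/-- `t.isLeafPos p` : the position `p` is a leaf of `t`. -/
def CMT.isLeafPos : CMT → List Bool → Prop
  | .leaf, [] => True
  | .node _ _, [] => False
  | .leaf, _ :: _ => False
  | .node l _, false :: p => l.isLeafPos p
  | .node _ r, true :: p => r.isLeafPos p

/-- Number of nodes of a chiral merge tree. -/
def CMT.numNodes : CMT → ℕ
  | .leaf => 1
  | .node l r => l.numNodes + r.numNodes + 1

/-- The sublevel-connected Morse order, compared via path words.  `wle last p q` compares
the path words `p` and `q` after a common prefix whose final letter is `last` (the root's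
chirality is `L = false`): if `q` is exhausted (`q` is a prefix of `p`) then `p ≤ q`; at the
first disagreement, `p ≤ q` iff `p`'s letter equals the last common letter. -/
def wle : Bool → List Bool → List Bool → Prop
  | _, _, [] => True
  | _, [], _ :: _ => False
  | last, x :: p, y :: q => if x = y then wle x p q else x = last

/-- An execution of the merge tree algorithm on the chiral merge tree `t`:
the nodes of `t` are processed in the sublevel-connected Morse order
`s 0 ≤ s 1 ≤ ⋯ ≤ s (n-1)`.  A leaf processed at step `j` creates a new vertex `v_j`
(labelled `j`); an inner node processed at step `j` creates a new edge `e_j`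
(labelled `j`) joining a vertex of the component built from its left child to a
vertex of the component built from its right child (the component of a node `x`
consists of the vertices whose leaf positions lie below `x`). -/
structure AlgRun (t : CMT) where
  /-- the enumeration of the nodes of `t` -/
  s : Fin t.numNodes ≃ {p : List Bool // t.isPos p}
  /-- the enumeration is sorted in the sublevel-connected Morse order -/
  sorted : ∀ i j : Fin t.numNodes, i ≤ j → wle false (s i).1 (s j).1
  /-- first endpoint (a previously created vertex) of the edge created at an inner step -/
  ep1 : Fin t.numNodes → Fin t.numNodes
  /-- second endpoint of the edge created at an inner step -/
  ep2 : Fin t.numNodes → Fin t.numNodes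
  ep1_leaf : ∀ j, ¬ t.isLeafPos (s j).1 → t.isLeafPos (s (ep1 j)).1
  ep2_leaf : ∀ j, ¬ t.isLeafPos (s j).1 → t.isLeafPos (s (ep2 j)).1
  ep1_lt : ∀ j, ¬ t.isLeafPos (s j).1 → ep1 j < j
  ep2_lt : ∀ j, ¬ t.isLeafPos (s j).1 → ep2 j < j
  /-- the first endpoint lies in the component of the left child -/
  ep1_mem : ∀ j, ¬ t.isLeafPos (s j).1 → ((s j).1 ++ [false]) <+: (s (ep1 j)).1
  /-- the second endpoint lies in the component of the right child -/
  ep2_mem : ∀ j, ¬ t.isLeafPos (s j).1 → ((s j).1 ++ [true]) <+: (s (ep2 j)).1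

/-- The vertices of the graph produced by the algorithm: the steps at which a leaf
is processed. -/
def AlgVert (t : CMT) (R : AlgRun t) : Type :=
  {j : Fin t.numNodes // t.isLeafPos (R.s j).1}

/-- The graph produced by the merge tree algorithm. -/
def AlgGraph (t : CMT) (R : AlgRun t) : SimpleGraph (AlgVert t R) where
  Adj u w := u ≠ w ∧ ∃ j : Fin t.numNodes, ¬ t.isLeafPos (R.s j).1 ∧
    ((R.ep1 j = u.1 ∧ R.ep2 j = w.1) ∨ (R.ep1 j = w.1 ∧ R.ep2 j = u.1))
  symm := by
    constructor
    rintro u w ⟨huw, j, hj, h⟩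
    exact ⟨huw.symm, j, hj, h.symm⟩
  loopless := by constructor; rintro u ⟨hu, -⟩; exact hu rfl

/-! Label every edge by an inner step `j` that adds it. Its endpoints were created at earlier
(leaf) steps, so the labelling increases strictly on incidences; a step determines its edge, so
edge labels are distinct; and a step is either a leaf step or an inner step, so vertex and edge
labels never coincide. -/

namespace AlgRun

variable {t : CMT} (R : AlgRun t)

def edge (j : Fin t.numNodes) (hj : ¬ t.isLeafPos (R.s j).1) : Sym2 (AlgVert t R) :=
  s(⟨R.ep1 j, R.ep1_leaf j hj⟩, ⟨R.ep2 j, R.ep2_leaf j hj⟩)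

theorem mem_edge {j : Fin t.numNodes} {hj : ¬ t.isLeafPos (R.s j).1} {v : AlgVert t R} :
    v ∈ R.edge j hj ↔ v.1 = R.ep1 j ∨ v.1 = R.ep2 j :=
  Sym2.mem_iff.trans (Iff.or Subtype.ext_iff Subtype.ext_iff)

theorem lt_of_mem_edge {j : Fin t.numNodes} {hj : ¬ t.isLeafPos (R.s j).1} {v : AlgVert t R}
    (hv : v ∈ R.edge j hj) : v.1 < j := by
  rcases R.mem_edge.1 hv with h | h <;> rw [h]
  exacts [R.ep1_lt j hj, R.ep2_lt j hj]

theorem exists_edge_eq {e : Sym2 (AlgVert t R)} (he : e ∈ (AlgGraph t R).edgeSet) :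
    ∃ j hj, R.edge j hj = e := by
  induction e using Sym2.ind with
  | _ u w =>
    obtain ⟨-, j, hj, ⟨h₁, h₂⟩ | ⟨h₁, h₂⟩⟩ := he
    · exact ⟨j, hj, congrArg₂ (fun a b : AlgVert t R => s(a, b)) (Subtype.ext h₁) (Subtype.ext h₂)⟩
    · refine ⟨j, hj, (congrArg₂ (fun a b : AlgVert t R => s(a, b)) ?_ ?_).trans Sym2.eq_swap⟩
      exacts [Subtype.ext h₁, Subtype.ext h₂]

noncomputable def edgeStep (e : (AlgGraph t R).edgeSet) : Fin t.numNodes :=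
  (R.exists_edge_eq e.2).choose

theorem not_isLeafPos_edgeStep (e : (AlgGraph t R).edgeSet) :
    ¬ t.isLeafPos (R.s (R.edgeStep e)).1 :=
  (R.exists_edge_eq e.2).choose_spec.choose

theorem edge_edgeStep (e : (AlgGraph t R).edgeSet) :
    R.edge (R.edgeStep e) (R.not_isLeafPos_edgeStep e) = e :=
  (R.exists_edge_eq e.2).choose_spec.choose_spec

theorem mem_iff_edgeStep {e : (AlgGraph t R).edgeSet} {v : AlgVert t R} :
    v ∈ (e : Sym2 (AlgVert t R)) ↔ v.1 = R.ep1 (R.edgeStep e) ∨ v.1 = R.ep2 (R.edgeStep e) := by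
  rw [← R.edge_edgeStep e, mem_edge]

theorem lt_edgeStep_of_mem {e : (AlgGraph t R).edgeSet} {v : AlgVert t R}
    (hv : v ∈ (e : Sym2 (AlgVert t R))) : v.1 < R.edgeStep e :=
  R.lt_of_mem_edge (hj := R.not_isLeafPos_edgeStep e) (by rwa [R.edge_edgeStep])

theorem edgeStep_injective : Function.Injective R.edgeStep := fun e e' h =>
  Subtype.ext <| (R.edge_edgeStep e).symm.trans <| by simp only [h, R.edge_edgeStep]

theorem val_ne_edgeStep (v : AlgVert t R) (e : (AlgGraph t R).edgeSet) :
    v.1 ≠ R.edgeStep e := fun h => R.not_isLeafPos_edgeStep e (h ▸ v.2)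

end AlgRun

/-- The function produced by the merge tree algorithm — each vertex is labelled by the
step at which it was created, and each edge by the (inner) step at which it was added —
is a discrete Morse function on the output graph (weakly increasing, with no two
simplices sharing a value), and every simplex is critical. -/
theorem alg_function_is_discrete_Morse (t : CMT) (R : AlgRun t) :
    ∃ fe : (AlgGraph t R).edgeSet → ℕ,
      -- each edge is labelled by the inner step producing it
      (∀ e : (AlgGraph t R).edgeSet, ∃ j : Fin t.numNodes,
        ¬ t.isLeafPos (R.s j).1 ∧ fe e = j.1 ∧
        ∀ v : AlgVert t R, v ∈ (e : Sym2 (AlgVert t R)) →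
          v.1 = R.ep1 j ∨ v.1 = R.ep2 j) ∧
      -- weakly increasing (indeed strictly on incidences)
      (∀ (v : AlgVert t R) (e : (AlgGraph t R).edgeSet),
        v ∈ (e : Sym2 (AlgVert t R)) → (v.1.1 : ℕ) < fe e) ∧
      -- at most 2-to-1 / all values distinct: every simplex is critical
      (∀ v w : AlgVert t R, (v.1.1 : ℕ) = w.1.1 → v = w) ∧
      (∀ e e' : (AlgGraph t R).edgeSet, fe e = fe e' → e = e') ∧
      (∀ (v : AlgVert t R) (e : (AlgGraph t R).edgeSet), (v.1.1 : ℕ) ≠ fe e) := by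
  refine ⟨fun e => R.edgeStep e,
    fun e => ⟨R.edgeStep e, R.not_isLeafPos_edgeStep e, rfl, fun _ => R.mem_iff_edgeStep.1⟩,
    fun _ _ => R.lt_edgeStep_of_mem,
    fun v w h => Subtype.ext (Fin.ext h),
    fun e e' h => R.edgeStep_injective (Fin.ext h),
    fun v e h => R.val_ne_edgeStep v e (Fin.ext h)⟩
end

section
/- For the discrete Morse function f constructed in the proof of the main theorem (building one vertex at each increase of B and one edge joining two existing components at each decrease of B), the induced homological sequence B^f equals the prescribed sequence B. -/
/-- A (ℕ-valued) discrete Morse function on a graph `G`: weakly increasing, at most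
2-to-1, and equal values occur only on an incident vertex–edge pair. -/
structure DMF {V : Type} [Fintype V] (G : SimpleGraph V) where
  fv : V → ℕ
  fe : G.edgeSet → ℕ
  mono : ∀ (v : V) (e : G.edgeSet), v ∈ (e : Sym2 V) → fv v ≤ fe e
  fv_inj : ∀ v w : V, fv v = fv w → v = w
  fe_inj : ∀ e e' : G.edgeSet, fe e = fe e' → e = e'
  mixed : ∀ (v : V) (e : G.edgeSet), fv v = fe e → v ∈ (e : Sym2 V)

/-- The closed level subcomplex `G_a` (all simplices of value `≤ a`). -/
def DMF.subLE {V : Type} [Fintype V] {G : SimpleGraph V} (F : DMF G) (a : ℕ) :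
    SimpleGraph {v : V // F.fv v ≤ a} where
  Adj u w := ∃ h : G.Adj u.1 w.1, F.fe ⟨s(u.1, w.1), h⟩ ≤ a
  symm := by
    constructor
    rintro u w ⟨h, hle⟩
    refine ⟨h.symm, ?_⟩
    have he : (⟨s(w.1, u.1), h.symm⟩ : G.edgeSet) = ⟨s(u.1, w.1), h⟩ :=
      Subtype.ext (Sym2.eq_swap)
    rw [he]; exact hle
  loopless := by constructor; rintro u ⟨h, -⟩; exact G.loopless.irrefl u.1 h

/-- The open level subcomplex (all simplices of value `< a`), i.e. the level
subcomplex `G_{a-ε}` immediately preceding level `a`. -/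
def DMF.subLT {V : Type} [Fintype V] {G : SimpleGraph V} (F : DMF G) (a : ℕ) :
    SimpleGraph {v : V // F.fv v < a} where
  Adj u w := ∃ h : G.Adj u.1 w.1, F.fe ⟨s(u.1, w.1), h⟩ < a
  symm := by
    constructor
    rintro u w ⟨h, hle⟩
    refine ⟨h.symm, ?_⟩
    have he : (⟨s(w.1, u.1), h.symm⟩ : G.edgeSet) = ⟨s(u.1, w.1), h⟩ :=
      Subtype.ext (Sym2.eq_swap)
    rw [he]; exact hle
  loopless := by constructor; rintro u ⟨h, -⟩; exact G.loopless.irrefl u.1 h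

/-- `b_0` of the level subcomplex at level `a`. -/
noncomputable def DMF.b0 {V : Type} [Fintype V] {G : SimpleGraph V} (F : DMF G) (a : ℕ) : ℕ :=
  Nat.card (F.subLE a).ConnectedComponent

/-- A simplex (vertex or edge) is critical if no other simplex shares its value. -/
def DMF.crit {V : Type} [Fintype V] {G : SimpleGraph V} (F : DMF G) :
    V ⊕ G.edgeSet → Prop
  | .inl v => ∀ e : G.edgeSet, F.fv v ≠ F.fe e
  | .inr e => ∀ v : V, F.fv v ≠ F.fe e

/-- The value of a simplex. -/
def DMF.fval {V : Type} [Fintype V] {G : SimpleGraph V} (F : DMF G) :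
    V ⊕ G.edgeSet → ℕ :=
  Sum.elim F.fv F.fe

/-- In the level subcomplex strictly below level `a`, the vertex `u` lies in the same
connected component as the simplex `σ`. -/
def DMF.reachBelow {V : Type} [Fintype V] {G : SimpleGraph V} (F : DMF G) (a : ℕ)
    (u : {v : V // F.fv v < a}) : V ⊕ G.edgeSet → Prop
  | .inl x => ∃ hx : F.fv x < a, (F.subLT a).Reachable u ⟨x, hx⟩
  | .inr e => ∃ x, x ∈ (e : Sym2 V) ∧ ∃ hx : F.fv x < a, (F.subLT a).Reachable u ⟨x, hx⟩

/-!
Keep every vertex and look at the spanning graph whose edges are those of value `≤ a`: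
the vertices of value `> a` are isolated in it, so it has `b0 a + #{v | a < f v}`
components. Going from level `a` to `a + 1` either adds a critical vertex, which lowers
the second summand by one, or adds a critical edge between two distinct components,
which merges them; in both cases `b0` changes exactly as `B` does.
-/

namespace SimpleGraph

variable {V : Type*} {G : SimpleGraph V}

theorem Reachable.apply_eq_of_forall_adj {β : Sort*} {f : V → β}
    (hf : ∀ x y, G.Adj x y → f x = f y) {x y : V} (h : G.Reachable x y) : f x = f y := by
  obtain ⟨p⟩ := h
  induction p with
  | nil => rfl
  | cons hadj _ ih => exact (hf _ _ hadj).trans ih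

section Induce

variable {s : Set V}

open Classical in
noncomputable def inducedComponentOrCompl (G : SimpleGraph V) (s : Set V) (x : V) :
    (G.induce s).ConnectedComponent ⊕ ↥sᶜ :=
  if hx : x ∈ s then .inl ((G.induce s).connectedComponentMk ⟨x, hx⟩) else .inr ⟨x, hx⟩

theorem inducedComponentOrCompl_of_mem {x : V} (hx : x ∈ s) :
    G.inducedComponentOrCompl s x = .inl ((G.induce s).connectedComponentMk ⟨x, hx⟩) :=
  dif_pos hx

theorem inducedComponentOrCompl_of_notMem {x : V} (hx : x ∉ s) :
    G.inducedComponentOrCompl s x = .inr ⟨x, hx⟩ :=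
  dif_neg hx

theorem Reachable.inducedComponentOrCompl_eq (hs : ∀ x y, G.Adj x y → x ∈ s) {x y : V}
    (h : G.Reachable x y) :
    G.inducedComponentOrCompl s x = G.inducedComponentOrCompl s y := by
  refine h.apply_eq_of_forall_adj fun a b hab => ?_
  have ha := hs a b hab
  have hb := hs b a hab.symm
  rw [inducedComponentOrCompl_of_mem ha, inducedComponentOrCompl_of_mem hb]
  exact congrArg Sum.inl (ConnectedComponent.connectedComponentMk_eq_of_adj (induce_adj.2 hab))

theorem Reachable.induce_of_forall_adj_mem (hs : ∀ x y, G.Adj x y → x ∈ s) {x y : V}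
    (hx : x ∈ s) (hy : y ∈ s) (h : G.Reachable x y) :
    (G.induce s).Reachable ⟨x, hx⟩ ⟨y, hy⟩ := by
  have := h.inducedComponentOrCompl_eq hs
  rw [inducedComponentOrCompl_of_mem hx, inducedComponentOrCompl_of_mem hy] at this
  exact ConnectedComponent.exact (Sum.inl_injective this)

noncomputable def connectedComponentEquivInduceSumCompl (hs : ∀ x y, G.Adj x y → x ∈ s) :
    G.ConnectedComponent ≃ (G.induce s).ConnectedComponent ⊕ ↥sᶜ where
  toFun := ConnectedComponent.lift (G.inducedComponentOrCompl s)
    fun _ _ p _ => p.reachable.inducedComponentOrCompl_eq hs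
  invFun := Sum.elim (ConnectedComponent.map (Embedding.induce s).toHom)
    fun x => G.connectedComponentMk x
  left_inv := by
    refine ConnectedComponent.ind fun x => ?_
    by_cases hx : x ∈ s
    · simp [inducedComponentOrCompl_of_mem hx]
    · simp [inducedComponentOrCompl_of_notMem hx]
  right_inv := by
    rintro (c | ⟨x, hx⟩)
    · induction c using ConnectedComponent.ind with
      | h x => simp [inducedComponentOrCompl_of_mem x.2]
    · simp [inducedComponentOrCompl_of_notMem hx]

theorem card_connectedComponent_eq_card_induce_add [Finite V]
    (hs : ∀ x y, G.Adj x y → x ∈ s) :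
    Nat.card G.ConnectedComponent
      = Nat.card (G.induce s).ConnectedComponent + Nat.card ↥sᶜ := by
  rw [Nat.card_congr (connectedComponentEquivInduceSumCompl hs), Nat.card_sum]

end Induce

section SupEdge

variable {u v : V}

open Classical in
noncomputable def componentMergingInto (G : SimpleGraph V) (u v x : V) :
    G.ConnectedComponent :=
  if G.Reachable x v then G.connectedComponentMk u else G.connectedComponentMk x

theorem componentMergingInto_of_reachable {x : V} (hx : G.Reachable x v) :
    G.componentMergingInto u v x = G.connectedComponentMk u :=
  if_pos hx

theorem componentMergingInto_of_not_reachable {x : V} (hx : ¬ G.Reachable x v) :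
    G.componentMergingInto u v x = G.connectedComponentMk x :=
  if_neg hx

theorem Reachable.componentMergingInto_eq (huv : ¬ G.Reachable u v) {x y : V}
    (h : (G ⊔ edge u v).Reachable x y) :
    G.componentMergingInto u v x = G.componentMergingInto u v y := by
  refine h.apply_eq_of_forall_adj fun a b hab => ?_
  rcases (sup_adj _ _ _ _).1 hab with hab | hab
  · have hr : G.Reachable a v ↔ G.Reachable b v :=
      ⟨hab.reachable.symm.trans, hab.reachable.trans⟩
    by_cases ha : G.Reachable a v
    · rw [componentMergingInto_of_reachable ha, componentMergingInto_of_reachable (hr.1 ha)]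
    · rw [componentMergingInto_of_not_reachable ha,
        componentMergingInto_of_not_reachable (mt hr.2 ha),
        ConnectedComponent.connectedComponentMk_eq_of_adj hab]
  · have hmerge : G.componentMergingInto u v u = G.componentMergingInto u v v := by
      rw [componentMergingInto_of_not_reachable huv,
        componentMergingInto_of_reachable (Reachable.refl v)]
    rcases ((edge_adj _ _ _ _).1 hab).1 with ⟨rfl, rfl⟩ | ⟨rfl, rfl⟩
    · exact hmerge
    · exact hmerge.symm

theorem componentMergingInto_ne (huv : ¬ G.Reachable u v) {x : V} :
    G.componentMergingInto u v x ≠ G.connectedComponentMk v := by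
  by_cases hx : G.Reachable x v
  · rw [componentMergingInto_of_reachable hx]
    exact fun h => huv (ConnectedComponent.exact h)
  · rw [componentMergingInto_of_not_reachable hx]
    exact fun h => hx (ConnectedComponent.exact h)

noncomputable def connectedComponentSupEdgeEquiv (huv : ¬ G.Reachable u v) :
    (G ⊔ edge u v).ConnectedComponent ≃
      {c : G.ConnectedComponent // c ≠ G.connectedComponentMk v} where
  toFun := ConnectedComponent.lift
    (fun x => ⟨G.componentMergingInto u v x, componentMergingInto_ne huv⟩)
    fun _ _ p _ => Subtype.ext (p.reachable.componentMergingInto_eq huv)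
  invFun c := c.1.map (Hom.ofLE le_sup_left)
  left_inv := by
    refine ConnectedComponent.ind fun x => ?_
    by_cases hx : G.Reachable x v
    · simp only [ConnectedComponent.lift_mk, componentMergingInto_of_reachable hx,
        ConnectedComponent.map_mk, Hom.coe_ofLE, id, ConnectedComponent.eq]
      have hadj : (G ⊔ edge u v).Adj u v :=
        .inr ((edge_adj _ _ _ _).2 ⟨.inl ⟨rfl, rfl⟩, by rintro rfl; exact huv .rfl⟩)
      exact hadj.reachable.trans (hx.mono le_sup_left).symm
    · simp [componentMergingInto_of_not_reachable hx]
  right_inv := by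
    rintro ⟨c, hc⟩
    induction c using ConnectedComponent.ind with
    | h x =>
      have hx : ¬ G.Reachable x v := fun h => hc (ConnectedComponent.sound h)
      simp [componentMergingInto_of_not_reachable hx]

theorem card_connectedComponent_sup_edge_add_one [Finite V] (huv : ¬ G.Reachable u v) :
    Nat.card (G ⊔ edge u v).ConnectedComponent + 1 = Nat.card G.ConnectedComponent := by
  classical
  rw [Nat.card_congr (connectedComponentSupEdgeEquiv huv), ← Finite.card_option,
    Nat.card_congr (Equiv.optionSubtypeNe _)]

end SupEdge

end SimpleGraph

namespace DMF

open SimpleGraph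

variable {V : Type} [Fintype V] {G : SimpleGraph V} (F : DMF G)

/-- Unlike `subLE a`, this keeps the vertices of value `> a`, as isolated vertices. -/
def spanningLE (a : ℕ) : SimpleGraph V where
  Adj x y := ∃ h : G.Adj x y, F.fe ⟨s(x, y), h⟩ ≤ a
  symm := ⟨fun x y ⟨h, hle⟩ => ⟨h.symm, by
    rwa [show (⟨s(y, x), h.symm⟩ : G.edgeSet) = ⟨s(x, y), h⟩ from
      Subtype.ext Sym2.eq_swap]⟩⟩
  loopless := ⟨fun x ⟨h, _⟩ => G.loopless.irrefl x h⟩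

variable {F}

theorem fv_le_of_spanningLE_adj {a : ℕ} {x y : V} (h : (F.spanningLE a).Adj x y) :
    F.fv x ≤ a :=
  (F.mono x ⟨s(x, y), h.1⟩ (Sym2.mem_mk_left x y)).trans h.2

theorem subLE_eq_induce (a : ℕ) : F.subLE a = (F.spanningLE a).induce {v | F.fv v ≤ a} :=
  rfl

theorem card_spanningLE (a : ℕ) :
    Nat.card (F.spanningLE a).ConnectedComponent = F.b0 a + {v | a < F.fv v}.ncard := by
  have hcompl : {v | F.fv v ≤ a}ᶜ = {v | a < F.fv v} := by ext; simp
  rw [b0, subLE_eq_induce, ← hcompl, ← Nat.card_coe_set_eq]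
  exact card_connectedComponent_eq_card_induce_add fun _ _ => fv_le_of_spanningLE_adj

theorem crit_of_injective (h : Function.Injective F.fval) : ∀ σ, F.crit σ
  | .inl _ => fun _ heq => Sum.inl_ne_inr (h heq)
  | .inr _ => fun _ heq => Sum.inl_ne_inr (h heq)

theorem b0_zero {v : V} (hv : F.fv v = 0) : F.b0 0 = 1 := by
  have : Subsingleton {x // F.fv x ≤ 0} :=
    ⟨fun x y => Subtype.ext (F.fv_inj _ _ (by omega))⟩
  have : Nonempty {x // F.fv x ≤ 0} := ⟨⟨v, hv.le⟩⟩
  exact Nat.card_eq_one_iff_unique.2 ⟨inferInstance, inferInstance⟩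

theorem b0_succ_of_crit_vertex {a : ℕ} {v : V} (hv : F.fv v = a + 1)
    (hcrit : F.crit (.inl v)) : F.b0 (a + 1) = F.b0 a + 1 := by
  have hgraph : F.spanningLE (a + 1) = F.spanningLE a := by
    ext x y
    refine ⟨fun ⟨h, hle⟩ => ⟨h, ?_⟩, fun ⟨h, hle⟩ => ⟨h, by omega⟩⟩
    have := hcrit ⟨s(x, y), h⟩
    omega
  have hverts : {x | a < F.fv x} = insert v {x | a + 1 < F.fv x} := by
    ext x
    simp only [Set.mem_ofPred_eq, Set.mem_insert_iff]
    constructor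
    · intro hx
      by_cases hxv : x = v
      · exact .inl hxv
      · have : F.fv x ≠ F.fv v := fun h => hxv (F.fv_inj _ _ h)
        exact .inr (by omega)
    · rintro (rfl | hx) <;> omega
  have hcard := card_spanningLE (F := F) a
  rw [← hgraph, card_spanningLE, hverts, Set.ncard_insert_of_notMem (by simp [hv])] at hcard
  omega

theorem spanningLE_succ_eq_sup_edge {a : ℕ} {e : G.edgeSet} (he : F.fe e = a + 1)
    {u w : V} (huw : (e : Sym2 V) = s(u, w)) :
    F.spanningLE (a + 1) = F.spanningLE a ⊔ edge u w := by
  ext x y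
  rw [sup_adj, adj_edge, ← huw]
  constructor
  · rintro ⟨h, hle⟩
    rcases hle.lt_or_eq with hlt | heq
    · exact .inl ⟨h, by omega⟩
    · exact .inr ⟨congrArg Subtype.val (F.fe_inj _ _ (heq.trans he.symm)).symm, h.ne⟩
  · rintro (⟨h, hle⟩ | ⟨hxy, -⟩)
    · exact ⟨h, by omega⟩
    · have hmem : s(x, y) ∈ G.edgeSet := hxy ▸ e.2
      refine ⟨hmem, ?_⟩
      rw [show (⟨s(x, y), hmem⟩ : G.edgeSet) = e from Subtype.ext hxy.symm, he]

theorem b0_succ_add_one_of_crit_edge {a : ℕ} {e : G.edgeSet} (he : F.fe e = a + 1)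
    (hcrit : F.crit (.inr e)) {u w : V} (huw : (e : Sym2 V) = s(u, w))
    (hu : F.fv u < a + 1) (hw : F.fv w < a + 1)
    (hnr : ¬ (F.subLT (a + 1)).Reachable ⟨u, hu⟩ ⟨w, hw⟩) :
    F.b0 (a + 1) + 1 = F.b0 a := by
  have hnr' : ¬ (F.spanningLE a).Reachable u w := by
    intro hr
    have hsub : (F.subLE a).Reachable ⟨u, Nat.le_of_lt_succ hu⟩ ⟨w, Nat.le_of_lt_succ hw⟩ :=
      hr.induce_of_forall_adj_mem (fun _ _ => fv_le_of_spanningLE_adj) _ _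
    exact hnr (hsub.map (⟨fun x => ⟨x.1, Nat.lt_succ_of_le x.2⟩,
      fun {_ _} ⟨h, hle⟩ => ⟨h, Nat.lt_succ_of_le hle⟩⟩ : F.subLE a →g F.subLT (a + 1)))
  have hverts : {x | a < F.fv x} = {x | a + 1 < F.fv x} := by
    ext x
    have := hcrit x
    simp only [Set.mem_ofPred_eq]
    omega
  have hcard := card_connectedComponent_sup_edge_add_one hnr'
  rw [← spanningLE_succ_eq_sup_edge he huw, card_spanningLE, card_spanningLE, hverts] at hcard
  omega

end DMF

theorem constructed_dmf_homological_sequence_general {V : Type} [Fintype V]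
    (G : SimpleGraph V) (F : DMF G) (n : ℕ) (B : ℕ → ℕ)
    (hB0 : B 0 = 1)
    (hstep : ∀ j, 1 ≤ j → j < n → B j = B (j - 1) + 1 ∨ B (j - 1) = B j + 1)
    (hinj : Function.Injective F.fval)
    (hvert0 : ∃ v : V, F.fv v = 0)
    (hvert : ∀ j, 1 ≤ j → j < n → B (j - 1) < B j → ∃ v : V, F.fv v = j)
    (hedge : ∀ j, 1 ≤ j → j < n → B j < B (j - 1) →
      ∃ e : G.edgeSet, F.fe e = j ∧ ∃ u w : V, (e : Sym2 V) = s(u, w) ∧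
        ∃ (hu : F.fv u < j) (hw : F.fv w < j),
          ¬ (F.subLT j).Reachable ⟨u, hu⟩ ⟨w, hw⟩) :
    ∀ j < n, F.b0 j = B j := by
  intro j hj
  induction j with
  | zero =>
    obtain ⟨v, hv⟩ := hvert0
    rw [hB0, DMF.b0_zero hv]
  | succ k ih =>
    have ih := ih (by omega)
    have hcrit := DMF.crit_of_injective hinj
    have hk := hstep (k + 1) (by omega) hj
    rw [Nat.add_sub_cancel] at hk
    rcases hk with hinc | hdec
    · obtain ⟨v, hv⟩ := hvert (k + 1) (by omega) hj (by rw [Nat.add_sub_cancel]; omega)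
      have := DMF.b0_succ_of_crit_vertex hv (hcrit _)
      omega
    · obtain ⟨e, he, u, w, huw, hu, hw, hnr⟩ :=
        hedge (k + 1) (by omega) hj (by rw [Nat.add_sub_cancel]; omega)
      have := DMF.b0_succ_add_one_of_crit_edge he (hcrit _) huw hu hw hnr
      omega

/-- For the discrete Morse function constructed in the proof of the main theorem —
values `0,…,n-1` are assigned bijectively to the simplices, a vertex is created at step
`0` and at each step where `B` increases, and at each step where `B` decreases an edge
is created joining two distinct connected components of the preceding sublevel
complex — the induced homological sequence equals `B`: the sublevel complex at level
`j` has exactly `B j` connected components. -/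
theorem constructed_dmf_homological_sequence {V : Type} [Fintype V]
    (G : SimpleGraph V) (F : DMF G) (n : ℕ) (hn : 0 < n) (B : ℕ → ℕ)
    (hB0 : B 0 = 1)
    (hstep : ∀ j, 1 ≤ j → j < n → B j = B (j - 1) + 1 ∨ B (j - 1) = B j + 1)
    (hbound : ∀ σ : V ⊕ G.edgeSet, F.fval σ < n)
    (hinj : Function.Injective F.fval)
    (hsurj : ∀ m < n, ∃ σ : V ⊕ G.edgeSet, F.fval σ = m)
    (hvert0 : ∃ v : V, F.fv v = 0)
    (hvert : ∀ j, 1 ≤ j → j < n → B (j - 1) < B j → ∃ v : V, F.fv v = j)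
    (hedge : ∀ j, 1 ≤ j → j < n → B j < B (j - 1) →
      ∃ e : G.edgeSet, F.fe e = j ∧ ∃ u w : V, (e : Sym2 V) = s(u, w) ∧
        ∃ (hu : F.fv u < j) (hw : F.fv w < j),
          ¬ (F.subLT j).Reachable ⟨u, hu⟩ ⟨w, hw⟩) :
    ∀ j < n, F.b0 j = B j :=
  constructed_dmf_homological_sequence_general G F n B hB0 hstep hinj hvert0 hvert hedge
end
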